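/- Let m ≥ 1 be an integer and suppose γ* = (γ*_{-m}, …, γ*_m) ∈ ℝ^{2m+1} is a global minimizer of the DRP integrated dispersion error E over ℝ^{2m+1}. Then γ* is antisymmetric: γ*_{-i} = −γ*_i for every i with 0 ≤ i ≤ m; in particular γ*_0 = 0 and Σ_{k=-m}^{m} γ*_k = 0. -/
import Mathlib

open Real Finset Polynomial Polynomial.Chebyshev

/-- The DRP integrated dispersion error functional. -/
noncomputable def drpError (m : ℕ) (γ : ℤ → ℝ) : ℝ :=
  2 * ∫ ζ in (0 : ℝ)..(π / 2),
    ((ζ - ∑ k ∈ Finset.Icc (-(m : ℤ)) (m : ℤ), γ k * Real.sin ((k : ℝ) * ζ)) ^ 2 +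
     (∑ k ∈ Finset.Icc (-(m : ℤ)) (m : ℤ), γ k * Real.cos ((k : ℝ) * ζ)) ^ 2)

lemma tdeg : ∀ n : ℕ, (T ℝ (n : ℤ)).natDegree ≤ n := by
  intro n
  induction n using Nat.strong_induction_on with
  | _ n ih =>
    match n with
    | 0 => simp [T_zero]
    | 1 => simp [T_one]
    | (k+2) =>
      have h := T_add_two ℝ (k : ℤ)
      rw [show ((k+2:ℕ):ℤ) = (k:ℤ)+2 by push_cast; ring, h]
      have h1 := ih (k+1) (by omega)
      have h0 := ih k (by omega)
      refine le_trans (natDegree_sub_le _ _) ?_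
      have : (2 * X * T ℝ ((k:ℤ)+1)).natDegree ≤ k + 2 := by
        refine le_trans (natDegree_mul_le) ?_
        have : (2 * X : ℝ[X]).natDegree ≤ 1 :=
          le_trans natDegree_mul_le (by simp)
        have h1' : (T ℝ ((k:ℤ)+1)).natDegree ≤ k + 1 := by
          rw [show ((k:ℤ)+1) = ((k+1:ℕ):ℤ) by push_cast; ring]; exact h1
        omega
      simp only [max_le_iff]
      exact ⟨this, by omega⟩

lemma tcoeff : ∀ n : ℕ, (T ℝ ((n:ℤ) + 1)).coeff (n+1) = 2 ^ n := by
  intro n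
  induction n using Nat.strong_induction_on with
  | _ n ih =>
    match n with
    | 0 => simp [T_one]
    | 1 => norm_num [T_two, coeff_sub, coeff_one]
    | (k+2) =>
      have h := T_add_two ℝ ((k:ℤ) + 1)
      rw [show ((k+2:ℕ):ℤ)+1 = ((k:ℤ)+1)+2 by push_cast; ring, h]
      have h1 := ih (k+1) (by omega)
      have hdeg : (T ℝ ((k:ℤ)+1)).natDegree ≤ k+1 := by
        rw [show ((k:ℤ)+1) = ((k+1:ℕ):ℤ) by push_cast; ring]; exact tdeg (k+1)
      have hzero : (T ℝ ((k:ℤ)+1)).coeff (k+3) = 0 :=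
        coeff_eq_zero_of_natDegree_lt (by omega)
      have h2C : (2 : ℝ[X]) = C 2 := by rw [map_ofNat]
      rw [coeff_sub, hzero, mul_assoc, h2C, coeff_C_mul,
        show k+2+1 = (k+1+1)+1 from rfl, coeff_X_mul]
      rw [show ((k:ℤ)+1)+1 = ((k+1:ℕ):ℤ)+1 by push_cast; ring, h1]
      ring

lemma cheb_zero : ∀ n : ℕ, ∀ d : ℕ → ℝ,
    (∑ j ∈ range (n+1), C (d j) * T ℝ (j:ℤ)) = 0 → ∀ j ≤ n, d j = 0 := by
  intro n
  induction n with
  | zero =>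
    intro d h j hj
    interval_cases j
    have : C (d 0) = 0 := by simpa [T_zero] using h
    simpa using this
  | succ n ih =>
    intro d h
    have htop : d (n+1) = 0 := by
      have hc := congrArg (fun p => Polynomial.coeff p (n+1)) h
      rw [sum_range_succ] at hc
      simp only [coeff_add, finset_sum_coeff, coeff_C_mul, coeff_zero] at hc
      have hlow : ∀ j ∈ range (n+1), d j * (T ℝ (j:ℤ)).coeff (n+1) = 0 := by
        intro j hj
        rw [coeff_eq_zero_of_natDegree_lt (lt_of_le_of_lt (tdeg j) (by simpa using hj)), mul_zero]
      rw [Finset.sum_eq_zero hlow, zero_add,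
        show ((n+1:ℕ):ℤ) = (n:ℤ)+1 by push_cast; ring, tcoeff n] at hc
      have : (2:ℝ)^n ≠ 0 := by positivity
      exact (mul_eq_zero.mp hc).resolve_right this
    have h' : ∑ j ∈ range (n+1), C (d j) * T ℝ (j:ℤ) = 0 := by
      rw [sum_range_succ] at h
      simpa [htop] using h
    intro j hj
    rcases Nat.lt_succ_iff_lt_or_eq.mp (Nat.lt_succ_of_le hj) with hlt | heq
    · exact ih d h' j (Nat.lt_succ_iff.mp hlt)
    · rw [heq]; exact htop

lemma sum_Icc_int (m : ℕ) (g : ℤ → ℝ) :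
    ∑ k ∈ Finset.Icc (-(m:ℤ)) (m:ℤ), g k
      = g 0 + ∑ j ∈ Finset.range m, (g ((j:ℤ)+1) + g (-((j:ℤ)+1))) := by
  induction m with
  | zero => simp
  | succ n ih =>
    have hset : Finset.Icc (-((n+1:ℕ):ℤ)) ((n+1:ℕ):ℤ)
        = insert (-((n:ℤ)+1)) (insert ((n:ℤ)+1) (Finset.Icc (-(n:ℤ)) (n:ℤ))) := by
      ext x; simp only [Finset.mem_Icc, Finset.mem_insert]; push_cast; omega
    rw [hset, Finset.sum_insert (by simp only [Finset.mem_Icc, Finset.mem_insert]; omega),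
      Finset.sum_insert (by simp only [Finset.mem_Icc]; omega), ih, Finset.sum_range_succ]
    ring

noncomputable def Fsum (m : ℕ) (γ : ℤ → ℝ) (ζ : ℝ) : ℝ :=
  ζ - ∑ k ∈ Finset.Icc (-(m : ℤ)) (m : ℤ), γ k * Real.sin ((k : ℝ) * ζ)

noncomputable def Ssum (m : ℕ) (γ : ℤ → ℝ) (ζ : ℝ) : ℝ :=
  ∑ k ∈ Finset.Icc (-(m : ℤ)) (m : ℤ), γ k * Real.cos ((k : ℝ) * ζ)

noncomputable def antiPart (γ : ℤ → ℝ) (k : ℤ) : ℝ := (γ k - γ (-k)) / 2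

noncomputable def esym (γ : ℤ → ℝ) (j : ℕ) : ℝ :=
  if j = 0 then γ 0 else γ (j:ℤ) + γ (-(j:ℤ))

lemma drpError_eq (m : ℕ) (γ : ℤ → ℝ) :
    drpError m γ = 2 * ∫ ζ in (0:ℝ)..(π/2), (Fsum m γ ζ ^ 2 + Ssum m γ ζ ^ 2) := rfl

lemma Fsum_anti (m : ℕ) (γ : ℤ → ℝ) (ζ : ℝ) : Fsum m (antiPart γ) ζ = Fsum m γ ζ := by
  unfold Fsum
  rw [sum_Icc_int m (fun k => antiPart γ k * Real.sin ((k : ℝ) * ζ)),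
    sum_Icc_int m (fun k => γ k * Real.sin ((k : ℝ) * ζ))]
  congr 1
  congr 1
  · push_cast; simp
  · refine Finset.sum_congr rfl fun j _ => ?_
    simp only [antiPart, neg_neg]
    push_cast
    rw [neg_mul, Real.sin_neg]
    ring

lemma Ssum_anti (m : ℕ) (γ : ℤ → ℝ) (ζ : ℝ) : Ssum m (antiPart γ) ζ = 0 := by
  unfold Ssum
  rw [sum_Icc_int m (fun k => antiPart γ k * Real.cos ((k : ℝ) * ζ))]
  have h1 : antiPart γ 0 * Real.cos (((0:ℤ) : ℝ) * ζ) = 0 := by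
    simp [antiPart]
  rw [h1, zero_add]
  refine Finset.sum_eq_zero fun j _ => ?_
  simp only [antiPart, neg_neg]
  push_cast
  rw [neg_mul, Real.cos_neg]
  ring

lemma Ssum_esym (m : ℕ) (γ : ℤ → ℝ) (ζ : ℝ) :
    Ssum m γ ζ = ∑ j ∈ Finset.range (m+1), esym γ j * Real.cos ((j : ℝ) * ζ) := by
  unfold Ssum
  rw [sum_Icc_int m (fun k => γ k * Real.cos ((k : ℝ) * ζ))]
  trans (esym γ 0 * Real.cos (((0:ℕ) : ℝ) * ζ)
      + ∑ j ∈ Finset.range m, esym γ (j+1) * Real.cos (((j+1 : ℕ) : ℝ) * ζ))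
  · congr 1
    refine Finset.sum_congr rfl fun j _ => ?_
    simp only [esym, Nat.succ_ne_zero, if_false]
    have hc : ((-(↑j + 1) : ℤ) : ℝ) = -(((j:ℕ):ℝ) + 1) := by push_cast; ring
    have hc2 : (((↑j + 1) : ℤ) : ℝ) = ((j:ℕ):ℝ) + 1 := by push_cast; ring
    have hc3 : (((j+1:ℕ)) : ℝ) = ((j:ℕ):ℝ) + 1 := by push_cast; ring
    have h4 : (((j+1:ℕ)) : ℤ) = (j:ℤ) + 1 := by push_cast; ring
    rw [h4, hc, hc2, hc3, neg_mul, Real.cos_neg]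
    ring
  · rw [Finset.sum_range_succ']
    exact add_comm _ _

lemma continuous_Fsum (m : ℕ) (γ : ℤ → ℝ) : Continuous (Fsum m γ) := by
  unfold Fsum
  exact continuous_id.sub (continuous_finset_sum _ fun k _ => by fun_prop)

lemma continuous_Ssum (m : ℕ) (γ : ℤ → ℝ) : Continuous (Ssum m γ) := by
  unfold Ssum
  exact continuous_finset_sum _ fun k _ => by fun_prop

theorem stmt_9 (m : ℕ) (hm : 1 ≤ m) (γs : ℤ → ℝ)
    (hmin : ∀ γ : ℤ → ℝ, drpError m γs ≤ drpError m γ) :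
    (∀ i : ℤ, 0 ≤ i → i ≤ (m : ℤ) → γs (-i) = -γs i) ∧ γs 0 = 0 ∧
      ∑ k ∈ Finset.Icc (-(m : ℤ)) (m : ℤ), γs k = 0 := by
  have hπ : (0:ℝ) < π/2 := by positivity
  have hint1 : IntervalIntegrable (fun ζ => Fsum m γs ζ ^ 2) MeasureTheory.volume 0 (π/2) :=
    ((continuous_Fsum m γs).pow 2).intervalIntegrable _ _
  have hint2 : IntervalIntegrable (fun ζ => Ssum m γs ζ ^ 2) MeasureTheory.volume 0 (π/2) :=
    ((continuous_Ssum m γs).pow 2).intervalIntegrable _ _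
  -- the integral of S² is zero
  have key : ∫ ζ in (0:ℝ)..(π/2), Ssum m γs ζ ^ 2 = 0 := by
    have h1 : drpError m (antiPart γs) = 2 * ∫ ζ in (0:ℝ)..(π/2), Fsum m γs ζ ^ 2 := by
      rw [drpError_eq]
      congr 1
      apply intervalIntegral.integral_congr
      intro ζ _
      simp [Fsum_anti, Ssum_anti]
    have h2 : drpError m γs
        = 2 * ((∫ ζ in (0:ℝ)..(π/2), Fsum m γs ζ ^ 2) + ∫ ζ in (0:ℝ)..(π/2), Ssum m γs ζ ^ 2) := by
      rw [drpError_eq, intervalIntegral.integral_add hint1 hint2]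
    have h3 := hmin (antiPart γs)
    rw [h1, h2] at h3
    have hnn : 0 ≤ ∫ ζ in (0:ℝ)..(π/2), Ssum m γs ζ ^ 2 :=
      intervalIntegral.integral_nonneg (le_of_lt hπ) fun x _ => sq_nonneg _
    linarith
  -- the zero set of S on the interval is infinite
  have hae := (intervalIntegral.integral_eq_zero_iff_of_le_of_nonneg_ae (le_of_lt hπ)
    (Filter.Eventually.of_forall fun x => sq_nonneg _) hint2).mp key
  simp only [Filter.EventuallyEq, Pi.zero_apply] at hae
  rw [MeasureTheory.ae_restrict_iff' measurableSet_Ioc] at hae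
  rw [MeasureTheory.ae_iff] at hae
  set Z : Set ℝ := {ζ | ζ ∈ Set.Ioc (0:ℝ) (π/2) ∧ Ssum m γs ζ = 0} with hZdef
  have hZinf : Z.Infinite := by
    by_contra hcon
    rw [Set.not_infinite] at hcon
    have h0 : MeasureTheory.volume Z = 0 := hcon.measure_zero MeasureTheory.volume
    have hsub : Set.Ioc (0:ℝ) (π/2) ⊆
        Z ∪ {ζ | ¬(ζ ∈ Set.Ioc (0:ℝ) (π/2) → Ssum m γs ζ ^ 2 = 0)} := by
      intro ζ hζ
      by_cases hS : Ssum m γs ζ = 0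
      · exact Or.inl ⟨hζ, hS⟩
      · refine Or.inr fun hi => hS ?_
        exact pow_eq_zero_iff (by norm_num) |>.mp (hi hζ)
    have hle := (MeasureTheory.measure_mono (μ := MeasureTheory.volume) hsub).trans (MeasureTheory.measure_union_le _ _)
    rw [h0, hae, add_zero] at hle
    rw [Real.volume_Ioc, sub_zero] at hle
    simp only [nonpos_iff_eq_zero, ENNReal.ofReal_eq_zero] at hle
    linarith
  -- build the Chebyshev polynomial
  set P : ℝ[X] := ∑ j ∈ Finset.range (m+1), C (esym γs j) * T ℝ (j:ℤ) with hPdef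
  have hPeval : ∀ ζ : ℝ, P.eval (Real.cos ζ) = Ssum m γs ζ := by
    intro ζ
    rw [Ssum_esym, hPdef, Polynomial.eval_finset_sum]
    refine Finset.sum_congr rfl fun j _ => ?_
    rw [Polynomial.eval_mul, Polynomial.eval_C, T_real_cos]
    push_cast
    ring_nf
  have hP0 : P = 0 := by
    apply Polynomial.eq_zero_of_infinite_isRoot
    have hZsub : Z ⊆ Set.Icc 0 π := by
      intro ζ hζ
      obtain ⟨⟨h1, h2⟩, _⟩ := hζ
      constructor <;> [linarith; linarith [pi_pos]]
    have himg : (Real.cos '' Z).Infinite := hZinf.image (Real.injOn_cos.mono hZsub)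
    refine himg.mono ?_
    rintro x ⟨ζ, ⟨_, hζ0⟩, rfl⟩
    simp only [Set.mem_setOf_eq, Polynomial.IsRoot, hPeval, hζ0]
  have he : ∀ j ≤ m, esym γs j = 0 := cheb_zero m (esym γs) hP0
  have hγ0 : γs 0 = 0 := by
    have := he 0 (Nat.zero_le m)
    simpa [esym] using this
  refine ⟨?_, hγ0, ?_⟩
  · intro i h0 him
    obtain ⟨j, rfl⟩ : ∃ j : ℕ, i = (j : ℤ) := ⟨i.toNat, (Int.toNat_of_nonneg h0).symm⟩
    rcases Nat.eq_zero_or_pos j with rfl | hj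
    · norm_num [hγ0]
    · have hjm : j ≤ m := by exact_mod_cast him
      have := he j hjm
      simp only [esym, Nat.pos_iff_ne_zero.mp hj, if_false] at this
      linarith
  · rw [sum_Icc_int m γs, hγ0, zero_add]
    refine Finset.sum_eq_zero fun j hj => ?_
    have hjm : j + 1 ≤ m := Finset.mem_range.mp hj
    have := he (j+1) hjm
    simp only [esym, Nat.succ_ne_zero, if_false] at this
    push_cast
    push_cast at this
    linarith
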